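/- Let α ∈ (0,σ_c/2), m ∈ (0,z_α), and let y solve y'' = ((1-y)/4)[(2α)²f'(y)/((1-y)f(y)³) - 1] with y(0)=m, y'(0)=0, under assumptions (f1)–(f5). If (1-m)f(m) = 2α, then y(t) < 1 for all t > 0, y is strictly increasing on (0,∞), and y(t) → 1 as t → +∞. -/

import Mathlib

open Set Filter Topology

/-!
Along the solution the energy `y'² - Φ(y)`, with `Φ(u) = ((1-u)² - (2α)²/f(u)²)/4`, is
conserved, and it vanishes at `t = 0` because `(1-m) f(m) = 2α`. As `(1-s) f(s)` is
increasing, `Φ > 0` on `(m, 1)`, so `y'` cannot vanish while `m < y < 1`; as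
`Φ(u) ≤ ((1-u)/2)²`, the speed bound `y' ≤ (1-y)/2` and Grönwall keep `y` below `1`.
Hence `y` increases to a limit `L ≤ 1`, and `L < 1` is impossible since then `y' → √Φ(L) > 0`.
-/

theorem Ioi_subset_of_isOpen {U : Set ℝ} {a : ℝ} (hU : IsOpen U)
    (ha : ∀ᶠ t in 𝓝[>] a, t ∈ U) (hstep : ∀ T, a < T → Ioo a T ⊆ U → T ∈ U) : Ioi a ⊆ U := by
  by_contra hsub
  obtain ⟨ε, hε, hεU⟩ := mem_nhdsGT_iff_exists_Ioo_subset.1 ha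
  set S := Ioi a \ U
  have hSne : S.Nonempty := sdiff_nonempty.2 hsub
  have hSbdd : BddBelow S := ⟨a, fun s hs => le_of_lt hs.1⟩
  have hεT : ε ≤ sInf S := le_csInf hSne fun s hs =>
    not_lt.1 fun hsε => hs.2 (hεU ⟨hs.1, hsε⟩)
  have hT : a < sInf S := lt_of_lt_of_le (mem_Ioi.1 hε) hεT
  have hTU : sInf S ∈ U := hstep _ hT fun s hs => by
    by_contra hsU
    exact (csInf_le hSbdd ⟨hs.1, hsU⟩).not_gt hs.2
  have hTS : sInf S ∈ closure Uᶜ :=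
    closure_mono (sdiff_subset_compl _ _) (csInf_mem_closure hSne hSbdd)
  rw [hU.isClosed_compl.closure_eq] at hTS
  exact hTS hTU

theorem HasDerivAt.eventually_nhdsGT_lt {g : ℝ → ℝ} {c x : ℝ} (hg : HasDerivAt g c x)
    (hc : 0 < c) : ∀ᶠ t in 𝓝[>] x, g x < g t := by
  filter_upwards [(hasDerivAt_iff_tendsto_slope_left_right.1 hg).2.eventually
    (eventually_gt_nhds hc), self_mem_nhdsWithin] with t hslope ht
  exact (slope_pos_iff ht).1 hslope

theorem nonpos_of_tendsto_deriv {y y' : ℝ → ℝ} {v : ℝ} (hy : ∀ t, HasDerivAt y (y' t) t)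
    (hbdd : IsBoundedUnder (· ≤ ·) atTop y) (hv : Tendsto y' atTop (𝓝 v)) : v ≤ 0 := by
  by_contra! hv0
  obtain ⟨T, hT⟩ := eventually_atTop.1 (hv.eventually (eventually_ge_nhds (half_lt_self hv0)))
  have hlin : ∀ t ≥ T, v / 2 * (t - T) ≤ y t - y T := fun t ht =>
    (convex_Ici T).mul_sub_le_image_sub_of_le_deriv
      (fun s _ => (hy s).continuousAt.continuousWithinAt)
      (fun s _ => (hy s).differentiableAt.differentiableWithinAt)
      (fun s hs => (hy s).deriv ▸ hT s (interior_subset hs)) T self_mem_Ici t ht ht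
  refine not_isBoundedUnder_of_tendsto_atTop ?_ hbdd
  refine tendsto_atTop_mono' atTop (eventually_ge_atTop T |>.mono fun t ht => ?_)
    (tendsto_atTop_add_const_left _ (y T)
      ((tendsto_atTop_add_const_right _ (-T) tendsto_id).const_mul_atTop (half_pos hv0)))
  have := hlin t ht
  simp only [id]
  linarith

theorem MonotoneOn.exists_tendsto_atTop {y : ℝ → ℝ} {a C : ℝ} (hmono : MonotoneOn y (Ici a))
    (hC : ∀ t ≥ a, y t ≤ C) : ∃ L, Tendsto y atTop (𝓝 L) := by
  have hw : Monotone fun t => y (max t a) := fun s t hst =>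
    hmono (le_max_right s a) (le_max_right t a) (max_le_max hst le_rfl)
  refine ⟨_, (tendsto_atTop_ciSup hw ⟨C, ?_⟩).congr' ?_⟩
  · rintro _ ⟨t, rfl⟩
    exact hC _ (le_max_right t a)
  · filter_upwards [eventually_ge_atTop a] with t ht
    rw [max_eq_left ht]

theorem conservation_of_energy {y v Φ A : ℝ → ℝ} {a b : ℝ} (hab : a ≤ b)
    (hy : ∀ t ∈ Icc a b, HasDerivAt y (v t) t) (hv : ∀ t ∈ Icc a b, HasDerivAt v (A (y t)) t)
    (hΦ : ∀ t ∈ Icc a b, HasDerivAt Φ (2 * A (y t)) (y t)) :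
    v b ^ 2 - Φ (y b) = v a ^ 2 - Φ (y a) := by
  have hE : ∀ t ∈ Icc a b, HasDerivAt (fun s => v s ^ 2 - Φ (y s)) 0 t := fun t ht =>
    (((hv t ht).pow 2).sub ((hΦ t ht).comp t (hy t ht))).congr_deriv (by norm_num; ring)
  exact constant_of_has_deriv_right_zero (fun t ht => (hE t ht).continuousAt.continuousWithinAt)
    (fun t ht => (hE t (Ico_subset_Icc_self ht)).hasDerivWithinAt) b ⟨hab, le_rfl⟩

theorem lt_of_deriv_le_mul_sub {y y' : ℝ → ℝ} {a b c K : ℝ} (hab : a ≤ b)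
    (hy : ∀ t ∈ Icc a b, HasDerivAt y (y' t) t) (ha : y a < c)
    (hbound : ∀ t ∈ Ico a b, y' t ≤ K * (c - y t)) : y b < c := by
  have hgron := le_gronwallBound_of_liminf_deriv_right_le (f := fun t => y t - c)
    (δ := y a - c) (K := -K) (ε := 0)
    (fun t ht => ((hy t ht).sub_const c).continuousAt.continuousWithinAt)
    (fun t ht _ hr => ((hy t (Ico_subset_Icc_self ht)).sub_const c).hasDerivWithinAt
      |>.liminf_right_slope_le hr)
    le_rfl (fun t ht => by linarith [hbound t ht]) b ⟨hab, le_rfl⟩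
  rw [gronwallBound_ε0] at hgron
  nlinarith [Real.exp_pos (-K * (b - a))]

noncomputable def accel (f f' : ℝ → ℝ) (α u : ℝ) : ℝ :=
  (1 - u) / 4 * ((2 * α) ^ 2 * f' u / ((1 - u) * f u ^ 3) - 1)

noncomputable def potential (f : ℝ → ℝ) (α u : ℝ) : ℝ :=
  ((1 - u) ^ 2 - (2 * α) ^ 2 / f u ^ 2) / 4

section potential

variable {f f' : ℝ → ℝ} {α u : ℝ}

theorem hasDerivAt_potential (hu : u ≠ 1) (hf : HasDerivAt f (f' u) u) (hfu : f u ≠ 0) :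
    HasDerivAt (potential f α) (2 * accel f f' α u) u := by
  have := ((((hasDerivAt_id u).const_sub 1).pow 2).sub
    ((hasDerivAt_const u ((2 * α) ^ 2)).div (hf.pow 2) (pow_ne_zero 2 hfu))).div_const 4
  refine this.congr_deriv ?_
  simp only [accel, Pi.pow_apply, id]
  field_simp
  ring

theorem potential_eq_zero (hfu : f u ≠ 0) (h : (1 - u) * f u = 2 * α) :
    potential f α u = 0 := by
  rw [potential, ← h]
  field_simp
  ring

theorem potential_le (f : ℝ → ℝ) (α u : ℝ) : potential f α u ≤ ((1 - u) / 2) ^ 2 := by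
  have : 0 ≤ (2 * α) ^ 2 / f u ^ 2 := by positivity
  rw [potential]
  linarith

theorem potential_pos (hα : 0 ≤ α) (hfu : f u ≠ 0) (h : 2 * α < (1 - u) * f u) :
    0 < potential f α u := by
  have hsq : (2 * α) ^ 2 < ((1 - u) * f u) ^ 2 := pow_lt_pow_left₀ h (by positivity) two_ne_zero
  have : (2 * α) ^ 2 / f u ^ 2 < (1 - u) ^ 2 := by
    rwa [div_lt_iff₀ (sq_pos_of_ne_zero hfu), ← mul_pow]
  rw [potential]
  linarith

theorem accel_pos (hu : u < 1) (hfu : 0 < f u) (h : (1 - u) * f u = 2 * α)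
    (hf' : f u < (1 - u) * f' u) : 0 < accel f f' α u := by
  have : accel f f' α u = (1 - u) / (4 * f u) * ((1 - u) * f' u - f u) := by
    rw [accel, ← h]
    field_simp
  rw [this]
  exact mul_pos (by positivity) (sub_pos.2 hf')

end potential

theorem strictMonoOn_one_sub_mul {f f' : ℝ → ℝ}
    (hf : ∀ s ∈ Ioo (0:ℝ) 1, HasDerivAt f (f' s) s)
    (hf' : ∀ s ∈ Ioo (0:ℝ) 1, 0 < (1 - s) * f' s - f s) :
    StrictMonoOn (fun s => (1 - s) * f s) (Ioo 0 1) := by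
  have hG : ∀ s ∈ Ioo (0:ℝ) 1, HasDerivAt (fun s => (1 - s) * f s) ((1 - s) * f' s - f s) s :=
    fun s hs => (((hasDerivAt_id s).const_sub 1).mul (hf s hs)).congr_deriv (by rw [id]; ring)
  exact strictMonoOn_of_hasDerivWithinAt_pos (convex_Ioo 0 1)
    (fun s hs => (hG s hs).continuousAt.continuousWithinAt)
    (fun s hs => (hG s (interior_subset hs)).hasDerivWithinAt)
    (fun s hs => hf' s (interior_subset hs))

structure IsCauchySolution (f f' : ℝ → ℝ) (α m : ℝ) (y y' : ℝ → ℝ) : Prop where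
  hasDerivAt : ∀ t, HasDerivAt y (y' t) t
  hasDerivAt_deriv : ∀ t, HasDerivAt y' (if y t < 1 then accel f f' α (y t) else 0) t
  map_zero : y 0 = m
  deriv_zero : y' 0 = 0

namespace IsCauchySolution

variable {f f' : ℝ → ℝ} {α m : ℝ} {y y' : ℝ → ℝ}

theorem continuous (hs : IsCauchySolution f f' α m y y') : Continuous y :=
  continuous_iff_continuousAt.2 fun t => (hs.hasDerivAt t).continuousAt

theorem continuous_deriv (hs : IsCauchySolution f f' α m y y') : Continuous y' :=
  continuous_iff_continuousAt.2 fun t => (hs.hasDerivAt_deriv t).continuousAt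

theorem hasDerivAt_accel (hs : IsCauchySolution f f' α m y y') {t : ℝ} (ht : y t < 1) :
    HasDerivAt y' (accel f f' α (y t)) t := by
  simpa only [if_pos ht] using hs.hasDerivAt_deriv t

theorem eventually_deriv_pos_and_lt_one (hs : IsCauchySolution f f' α m y y') (hm : m < 1)
    (hacc : 0 < accel f f' α m) : ∀ᶠ t in 𝓝[>] 0, 0 < y' t ∧ y t < 1 := by
  have h0 : y 0 < 1 := hs.map_zero ▸ hm
  have hy'0 := hs.hasDerivAt_accel h0
  rw [hs.map_zero] at hy'0
  filter_upwards [hy'0.eventually_nhdsGT_lt hacc,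
    nhdsWithin_le_nhds (hs.continuous.continuousAt.eventually (eventually_lt_nhds h0))]
    with t hy't hyt
  rw [hs.deriv_zero] at hy't
  exact ⟨hy't, hyt⟩

theorem sq_deriv_eq_potential (hs : IsCauchySolution f f' α m y y')
    (hf : ∀ s ∈ Ioo (0:ℝ) 1, HasDerivAt f (f' s) s) (hfpos : ∀ s ∈ Ioo (0:ℝ) 1, 0 < f s)
    (hfm : (1 - m) * f m = 2 * α) {T : ℝ} (hT : 0 ≤ T)
    (hyT : ∀ t ∈ Icc 0 T, y t ∈ Ioo 0 1) : y' T ^ 2 = potential f α (y T) := by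
  have hE := conservation_of_energy hT (fun t _ => hs.hasDerivAt t)
    (fun t ht => hs.hasDerivAt_accel (hyT t ht).2)
    (fun t ht => hasDerivAt_potential (hyT t ht).2.ne (hf _ (hyT t ht)) (hfpos _ (hyT t ht)).ne')
  have h0 := hyT 0 ⟨le_rfl, hT⟩
  rw [hs.map_zero] at hE h0
  rw [hs.deriv_zero, potential_eq_zero (hfpos m h0).ne' hfm] at hE
  linarith

theorem deriv_pos_and_lt_one_of_forall_Ioo (hs : IsCauchySolution f f' α m y y')
    (hf : ∀ s ∈ Ioo (0:ℝ) 1, HasDerivAt f (f' s) s) (hfpos : ∀ s ∈ Ioo (0:ℝ) 1, 0 < f s)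
    (hfm : (1 - m) * f m = 2 * α) (hα : 0 ≤ α) (hm : m ∈ Ioo (0:ℝ) 1)
    (hG : ∀ s ∈ Ioo m 1, 2 * α < (1 - s) * f s) {T : ℝ} (hT : 0 < T)
    (hgood : ∀ t ∈ Ioo 0 T, 0 < y' t ∧ y t < 1) : 0 < y' T ∧ y T < 1 := by
  have hmono : StrictMonoOn y (Icc 0 T) :=
    strictMonoOn_of_hasDerivWithinAt_pos (convex_Icc 0 T) hs.continuous.continuousOn
      (fun t _ => (hs.hasDerivAt t).hasDerivWithinAt)
      (fun t ht => (hgood t (by rwa [interior_Icc] at ht)).1)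
  have hmy : ∀ t ∈ Icc 0 T, m ≤ y t := fun t ht =>
    hs.map_zero ▸ hmono.monotoneOn ⟨le_rfl, hT.le⟩ ht ht.1
  have hlt : ∀ t ∈ Ico 0 T, y t < 1 := fun t ht =>
    ht.1.eq_or_lt.elim (fun h => h ▸ hs.map_zero ▸ hm.2) fun h => (hgood t ⟨h, ht.2⟩).2
  have hIoo : ∀ t ∈ Icc 0 T, y t < 1 → y t ∈ Ioo 0 1 := fun t ht h =>
    ⟨hm.1.trans_le (hmy t ht), h⟩
  have hspeed : ∀ t ∈ Ico 0 T, y' t ≤ 1 / 2 * (1 - y t) := fun t ht => by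
    have hsq := hs.sq_deriv_eq_potential hf hfpos hfm ht.1 fun u hu =>
      hIoo u ⟨hu.1, hu.2.trans ht.2.le⟩ (hlt u ⟨hu.1, hu.2.trans_lt ht.2⟩)
    have h1 : 0 ≤ (1 - y t) / 2 := by linarith [hlt t ht]
    linarith [(abs_le_of_sq_le_sq' (hsq.trans_le (potential_le f α (y t))) h1).2]
  have hT1 : y T < 1 := lt_of_deriv_le_mul_sub hT.le (fun t _ => hs.hasDerivAt t)
    (hs.map_zero ▸ hm.2) hspeed
  have hmT : m < y T := hs.map_zero ▸ hmono ⟨le_rfl, hT.le⟩ ⟨hT.le, le_rfl⟩ hT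
  have hsq : y' T ^ 2 = potential f α (y T) :=
    hs.sq_deriv_eq_potential hf hfpos hfm hT.le fun t ht =>
      hIoo t ht (ht.2.eq_or_lt.elim (fun h => h ▸ hT1) fun h => hlt t ⟨ht.1, h⟩)
  have hnonneg : 0 ≤ y' T :=
    le_on_closure (fun t ht => (hgood t ht).1.le) continuousOn_const
      hs.continuous_deriv.continuousOn (by rw [closure_Ioo hT.ne]; exact ⟨hT.le, le_rfl⟩)
  have hpos : 0 < y' T ^ 2 :=
    hsq ▸ potential_pos hα (hfpos _ ⟨hm.1.trans hmT, hT1⟩).ne' (hG _ ⟨hmT, hT1⟩)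
  exact ⟨hnonneg.lt_of_ne (by rintro h; simp [← h] at hpos), hT1⟩

theorem tendsto_atTop_one (hs : IsCauchySolution f f' α m y y')
    (hf : ∀ s ∈ Ioo (0:ℝ) 1, HasDerivAt f (f' s) s) (hfpos : ∀ s ∈ Ioo (0:ℝ) 1, 0 < f s)
    (hfm : (1 - m) * f m = 2 * α) (hα : 0 ≤ α) (hm : m ∈ Ioo (0:ℝ) 1)
    (hG : ∀ s ∈ Ioo m 1, 2 * α < (1 - s) * f s) (hpos : ∀ t > 0, 0 < y' t ∧ y t < 1)
    (hmono : StrictMonoOn y (Ici 0)) : Tendsto y atTop (𝓝 1) := by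
  have hmem : ∀ t ≥ 0, y t ∈ Ico m 1 := fun t ht =>
    ht.eq_or_lt.elim (fun h => by rw [← h, hs.map_zero]; exact ⟨le_rfl, hm.2⟩)
      fun h => ⟨hs.map_zero ▸ (hmono self_mem_Ici ht.le h).le, (hpos t h).2⟩
  obtain ⟨L, hL⟩ := hmono.monotoneOn.exists_tendsto_atTop fun t ht => (hmem t ht).2.le
  have hmL : m < L := by
    have h1 : m < y 1 := hs.map_zero ▸ hmono self_mem_Ici (mem_Ici.2 zero_le_one) zero_lt_one
    refine h1.trans_le (ge_of_tendsto hL ?_)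
    filter_upwards [eventually_ge_atTop 1] with t ht
    exact hmono.monotoneOn (mem_Ici.2 zero_le_one) (mem_Ici.2 (zero_le_one.trans ht)) ht
  have hL1 : L ≤ 1 :=
    le_of_tendsto hL ((eventually_ge_atTop 0).mono fun t ht => (hmem t ht).2.le)
  obtain rfl | hL1 := hL1.eq_or_lt
  · exact hL
  have hLI : L ∈ Ioo (0:ℝ) 1 := ⟨hm.1.trans hmL, hL1⟩
  have hsq : Tendsto (fun t => y' t ^ 2) atTop (𝓝 (potential f α L)) := by
    refine ((hasDerivAt_potential hL1.ne (hf L hLI) (hfpos L hLI).ne').continuousAt.tendsto.comp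
      hL).congr' ((eventually_ge_atTop 0).mono fun T hT => ?_)
    refine (hs.sq_deriv_eq_potential hf hfpos hfm hT fun t ht => ?_).symm
    exact ⟨hm.1.trans_le (hmem t ht.1).1, (hmem t ht.1).2⟩
  have hv : Tendsto y' atTop (𝓝 √(potential f α L)) :=
    (Real.continuous_sqrt.tendsto _ |>.comp hsq).congr'
      ((eventually_gt_atTop 0).mono fun t ht => Real.sqrt_sq (hpos t ht).1.le)
  exact absurd (nonpos_of_tendsto_deriv hs.hasDerivAt hL.isBoundedUnder_le hv)
    (Real.sqrt_pos.2 (potential_pos hα (hfpos L hLI).ne' (hG L ⟨hmL, hL1⟩))).not_ge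

end IsCauchySolution

theorem stmt6_general (f f' : ℝ → ℝ) (α m z : ℝ)
    (hf_nonneg : ∀ s ∈ Ico (0:ℝ) 1, 0 ≤ f s)
    (hf_zero : ∀ s ∈ Ico (0:ℝ) 1, (f s = 0 ↔ s = 0))
    (hd1 : ∀ s ∈ Ioo (0:ℝ) 1, HasDerivAt f (f' s) s)
    (hf3 : ∀ s ∈ Ioo (0:ℝ) 1, 0 < (1 - s) * f' s - f s)
    (hz : z ∈ Ioo (0:ℝ) 1)
    (hm : m ∈ Ioo (0:ℝ) z)
    (hcase : (1 - m) * f m = 2 * α)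
    (y y' : ℝ → ℝ)
    (hy : ∀ t : ℝ, HasDerivAt y (y' t) t)
    (hy' : ∀ t : ℝ, HasDerivAt y'
      (if y t < 1 then
        (1 - y t) / 4 * ((2 * α) ^ 2 * f' (y t) / ((1 - y t) * (f (y t)) ^ 3) - 1)
      else 0) t)
    (hy0 : y 0 = m) (hy'0 : y' 0 = 0) :
    (∀ t : ℝ, 0 < t → y t < 1) ∧ StrictMonoOn y (Ici 0) ∧
      Tendsto y atTop (nhds 1) := by
  have hmI : m ∈ Ioo (0:ℝ) 1 := ⟨hm.1, hm.2.trans hz.2⟩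
  have hfpos : ∀ s ∈ Ioo (0:ℝ) 1, 0 < f s := fun s hs =>
    (hf_nonneg s (Ioo_subset_Ico_self hs)).lt_of_ne fun h =>
      hs.1.ne' ((hf_zero s (Ioo_subset_Ico_self hs)).1 h.symm)
  have hα : 0 ≤ α := by
    have := mul_pos (sub_pos.2 hmI.2) (hfpos m hmI)
    linarith
  have hG : ∀ s ∈ Ioo m 1, 2 * α < (1 - s) * f s := fun s hs =>
    hcase ▸ strictMonoOn_one_sub_mul hd1 hf3 hmI ⟨hmI.1.trans hs.1, hs.2⟩ hs.1
  have hs : IsCauchySolution f f' α m y y' := ⟨hy, hy', hy0, hy'0⟩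
  have hpos : ∀ t > 0, 0 < y' t ∧ y t < 1 :=
    Ioi_subset_of_isOpen
      ((isOpen_lt continuous_const hs.continuous_deriv).inter
        (isOpen_lt hs.continuous continuous_const))
      (hs.eventually_deriv_pos_and_lt_one hmI.2
        (accel_pos hmI.2 (hfpos m hmI) hcase (sub_pos.1 (hf3 m hmI))))
      fun T hT hsub => hs.deriv_pos_and_lt_one_of_forall_Ioo hd1 hfpos hcase hα hmI hG hT hsub
  have hmono : StrictMonoOn y (Ici 0) :=
    strictMonoOn_of_hasDerivWithinAt_pos (convex_Ici 0) hs.continuous.continuousOn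
      (fun t _ => (hy t).hasDerivWithinAt) fun t ht => (hpos t (by rwa [interior_Ici] at ht)).1
  exact ⟨fun t ht => (hpos t ht).2, hmono,
    hs.tendsto_atTop_one hd1 hfpos hcase hα hmI hG hpos hmono⟩

/-- Case (ii) of the ODE analysis: if `(1-m)f(m) = 2α` with `m ∈ (0, z_α)`, the solution of
`y'' = ((1-y)/4)[(2α)²f'(y)/((1-y)f(y)³) - 1]`, `y(0)=m`, `y'(0)=0` (with the right-hand
side extended by `0` for `y ≥ 1`) satisfies `y < 1` on `(0,∞)`, is strictly increasing
there, and `y(t) → 1` as `t → +∞`. -/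
theorem stmt6 (f f' f'' : ℝ → ℝ) (σc α m z : ℝ) (hσ : 0 < σc)
    (hf_nonneg : ∀ s ∈ Ico (0:ℝ) 1, 0 ≤ f s)
    (hf_zero : ∀ s ∈ Ico (0:ℝ) 1, (f s = 0 ↔ s = 0))
    (hc0 : ContinuousOn f (Ico 0 1))
    (hd1 : ∀ s ∈ Ioo (0:ℝ) 1, HasDerivAt f (f' s) s)
    (hd2 : ∀ s ∈ Ioo (0:ℝ) 1, HasDerivAt f' (f'' s) s)
    (hc2 : ContinuousOn f'' (Ioo 0 1))
    (hf3 : ∀ s ∈ Ioo (0:ℝ) 1, 0 < (1 - s) * f' s - f s)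
    (hf2 : Tendsto (fun s => (1 - s) * f s) (nhdsWithin 1 (Iio 1)) (nhds σc))
    (hf4 : ∀ s ∈ Ioo (0:ℝ) 1, deriv (fun t => (1 - t) * f' t / f t) s < 0)
    (hf5 : Tendsto (fun s => ((1 - s) * f' s - f s) / (1 - s) ^ 3)
      (nhdsWithin 1 (Iio 1)) atTop)
    (hα : α ∈ Ioo (0:ℝ) (σc / 2))
    (hz : z ∈ Ioo (0:ℝ) 1)
    (hzdef : f' z / ((1 - z) * (f z) ^ 3) = 1 / (2 * α) ^ 2)
    (hm : m ∈ Ioo (0:ℝ) z)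
    (hcase : (1 - m) * f m = 2 * α)
    (y y' : ℝ → ℝ)
    (hy : ∀ t : ℝ, HasDerivAt y (y' t) t)
    (hy' : ∀ t : ℝ, HasDerivAt y'
      (if y t < 1 then
        (1 - y t) / 4 * ((2 * α) ^ 2 * f' (y t) / ((1 - y t) * (f (y t)) ^ 3) - 1)
      else 0) t)
    (hy0 : y 0 = m) (hy'0 : y' 0 = 0) :
    (∀ t : ℝ, 0 < t → y t < 1) ∧ StrictMonoOn y (Ici 0) ∧
      Tendsto y atTop (nhds 1) :=
  stmt6_general f f' α m z hf_nonneg hf_zero hd1 hf3 hz hm hcase y y' hy hy' hy0 hy'0
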